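/- arXiv:2510.04736 — 6 statements merged into one kernel-verified Lean document; each statement's English description precedes it below -/
import Mathlib

section
/- Let (Ω, ℙ) be a probability space, L : Ω → ℝ a random variable whose law is absolutely continuous with respect to Lebesgue measure with density bounded almost everywhere by a constant M ≥ 0, and X : Ω → ℝ^d an integrable random vector with ‖X‖₂ ≤ G almost surely. For z ∈ ℝ define μ(z) = E[X · 1{L ≥ z}]. Then for all z, z̃ ∈ ℝ, ‖μ(z̃) − μ(z)‖₂ ≤ G · M · |z̃ − z|. -/
/-!
Between the thresholds `z ≤ z̃` the two tail integrals differ by the integral of `X` over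
the event `{z ≤ L < z̃}`. Its norm is at most `G` times the probability of that event, and
the bounded density gives `P(z ≤ L < z̃) ≤ M (z̃ - z)`.
-/

open MeasureTheory

theorem MeasureTheory.Measure.le_mul_of_rnDeriv_le {α : Type*} [MeasurableSpace α]
    {ν μ : Measure α} [ν.HaveLebesgueDecomposition μ] [SFinite μ] (hac : ν ≪ μ) {c : ENNReal}
    (h : ∀ᵐ x ∂μ, ν.rnDeriv μ x ≤ c) (s : Set α) : ν s ≤ c * μ s :=
  calc ν s = μ.withDensity (ν.rnDeriv μ) s := by rw [Measure.withDensity_rnDeriv_eq ν μ hac]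
    _ = ∫⁻ x in s, ν.rnDeriv μ x ∂μ := withDensity_apply' _ s
    _ ≤ ∫⁻ _ in s, c ∂μ := lintegral_mono_ae (ae_restrict_of_ae h)
    _ = c * μ s := setLIntegral_const s c

theorem MeasureTheory.Measure.apply_Ico_le_of_rnDeriv_le {ν : Measure ℝ}
    [ν.HaveLebesgueDecomposition volume] (hac : ν ≪ volume) {M : ℝ} (hM : 0 ≤ M)
    (h : ∀ᵐ x, ν.rnDeriv volume x ≤ ENNReal.ofReal M) (a b : ℝ) :
    ν (Set.Ico a b) ≤ ENNReal.ofReal (M * (b - a)) := by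
  simpa only [Real.volume_Ico, ← ENNReal.ofReal_mul hM] using
    ν.le_mul_of_rnDeriv_le hac h (Set.Ico a b)

theorem MeasureTheory.norm_setIntegral_sub_setIntegral_le {Ω E : Type*} [MeasurableSpace Ω]
    [NormedAddCommGroup E] [NormedSpace ℝ E] {P : Measure Ω} [IsFiniteMeasure P]
    {X : Ω → E} {G : ℝ} (hG : ∀ᵐ ω ∂P, ‖X ω‖ ≤ G) {s t : Set Ω} (hs : MeasurableSet s)
    (hX : IntegrableOn X t P) (hst : s ⊆ t) :
    ‖∫ ω in t, X ω ∂P - ∫ ω in s, X ω ∂P‖ ≤ G * P.real (t \ s) := by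
  rw [← setIntegral_sdiff hs hX hst]
  exact norm_setIntegral_le_of_norm_le_const_ae (measure_lt_top P _) (ae_restrict_of_ae hG)

theorem sdiff_setOf_le_eq_preimage_Ico {Ω : Type*} (L : Ω → ℝ) (a b : ℝ) :
    {ω | a ≤ L ω} \ {ω | b ≤ L ω} = L ⁻¹' Set.Ico a b := by
  ext ω
  simp

/-- If the law of `L` has a Lebesgue density bounded a.e. by `M`, and `X` is an
integrable random vector bounded a.s. in norm by `G`, then the tail-weighted
expectation `μ(z) = E[X · 1{L ≥ z}]` is Lipschitz in the threshold:
`‖μ(z̃) − μ(z)‖ ≤ G · M · |z̃ − z|`. -/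
theorem tail_weighted_expectation_lipschitz
    {Ω : Type*} [MeasurableSpace Ω] (P : Measure Ω) [IsProbabilityMeasure P]
    {d : ℕ} (L : Ω → ℝ) (hL : Measurable L)
    (hac : P.map L ≪ (volume : Measure ℝ))
    (M : ℝ) (hM : 0 ≤ M)
    (hdens : ∀ᵐ x ∂(volume : Measure ℝ),
      (P.map L).rnDeriv volume x ≤ ENNReal.ofReal M)
    (X : Ω → EuclideanSpace ℝ (Fin d)) (hXint : Integrable X P)
    (G : ℝ) (hG : ∀ᵐ ω ∂P, ‖X ω‖ ≤ G)
    (μ : ℝ → EuclideanSpace ℝ (Fin d))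
    (hμ : ∀ z : ℝ, μ z = ∫ ω in {ω | z ≤ L ω}, X ω ∂P) :
    ∀ z ztilde : ℝ, ‖μ ztilde - μ z‖ ≤ G * M * |ztilde - z| := by
  intro z ztilde
  wlog hz : z ≤ ztilde generalizing z ztilde
  · rw [norm_sub_rev, abs_sub_comm]
    exact this ztilde z (le_of_not_ge hz)
  have hG0 : 0 ≤ G := (norm_nonneg _).trans hG.exists.choose_spec
  have hprob : P.real (L ⁻¹' Set.Ico z ztilde) ≤ M * (ztilde - z) := by
    refine ENNReal.toReal_le_of_le_ofReal (mul_nonneg hM (sub_nonneg.2 hz)) ?_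
    rw [← Measure.map_apply hL measurableSet_Ico]
    exact (P.map L).apply_Ico_le_of_rnDeriv_le hac hM hdens z ztilde
  rw [hμ, hμ, norm_sub_rev, abs_of_nonneg (sub_nonneg.2 hz), mul_assoc]
  calc _ ≤ G * P.real ({ω | z ≤ L ω} \ {ω | ztilde ≤ L ω}) :=
        norm_setIntegral_sub_setIntegral_le hG (measurableSet_le measurable_const hL)
          hXint.integrableOn fun ω hω => hz.trans hω
    _ ≤ G * (M * (ztilde - z)) := by
        rw [sdiff_setOf_le_eq_preimage_Ico]
        gcongr
end

section
/- Let (Ω, ℙ) be a probability space, L : Ω → ℝ a random variable whose law is absolutely continuous with respect to Lebesgue measure with density bounded almost everywhere by M ≥ 0, and X : Ω → ℝ^d an integrable random vector with ‖X‖₂ ≤ G almost surely. For z ∈ ℝ set μ(z) = E[X · 1{L ≥ z}] and p(z) = ℙ(L ≥ z), and when p(z) > 0 set g(z) = p(z)⁻¹ • μ(z). Then for all z, z̃ ∈ ℝ with p(z) > 0 and p(z̃) > 0, ‖g(z̃) − g(z)‖₂ ≤ 2 · G · M · |z̃ − z| / p(z̃). -/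
/-! Both `μ` and `p` are integrals over the tail `{z ≤ L}` (of `X` and of `1`), and moving the
threshold from `z` to `z̃` changes the tail by the event `{L ∈ [z, z̃)}`, of probability at most
`M |z̃ - z|` by the density bound. Hence `μ` is `G M`-Lipschitz and `p` is `M`-Lipschitz, and in
`g z̃ - g z = p(z̃)⁻¹ • (μ z̃ - μ z) + (p(z̃)⁻¹ - p(z)⁻¹) • μ z` both terms are at most
`G M |z̃ - z| / p(z̃)`, the second because `‖μ z‖ ≤ G p(z)`. -/

open MeasureTheory Set

namespace MeasureTheory.Measure

theorem le_smul_of_ae_rnDeriv_le {α : Type*} [MeasurableSpace α] {μ ν : Measure α}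
    [HaveLebesgueDecomposition μ ν] [SFinite ν] (hμν : μ ≪ ν) {c : ENNReal}
    (hc : ∀ᵐ x ∂ν, μ.rnDeriv ν x ≤ c) : μ ≤ c • ν := by
  intro s
  rw [← withDensity_rnDeriv_eq _ _ hμν, withDensity_apply', smul_apply, smul_eq_mul,
    ← setLIntegral_const]
  exact setLIntegral_mono_ae aemeasurable_const (hc.mono fun _ hx _ ↦ hx)

end MeasureTheory.Measure

section TailIntegral

variable {Ω E : Type*} [MeasurableSpace Ω] [NormedAddCommGroup E] [NormedSpace ℝ E]
  {P : Measure Ω} {L : Ω → ℝ} {M : ℝ}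

theorem measureReal_preimage_Ico_le (hL : Measurable L) (hM : 0 ≤ M)
    (hlaw : P.map L ≤ ENNReal.ofReal M • volume) {a b : ℝ} (hab : a ≤ b) :
    P.real (L ⁻¹' Ico a b) ≤ M * (b - a) := by
  have h := hlaw (Ico a b)
  rw [Measure.map_apply hL measurableSet_Ico, Measure.smul_apply, Real.volume_Ico, smul_eq_mul,
    ← ENNReal.ofReal_mul hM] at h
  exact ENNReal.toReal_le_of_le_ofReal (mul_nonneg hM (sub_nonneg.2 hab)) h

theorem norm_setIntegral_tail_sub_le [IsFiniteMeasure P] [NeZero P] (hL : Measurable L)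
    (hM : 0 ≤ M) (hlaw : P.map L ≤ ENNReal.ofReal M • volume) {F : Ω → E} (hF : Integrable F P)
    {G : ℝ} (hG : ∀ᵐ ω ∂P, ‖F ω‖ ≤ G) (a b : ℝ) :
    ‖∫ ω in {ω | b ≤ L ω}, F ω ∂P - ∫ ω in {ω | a ≤ L ω}, F ω ∂P‖ ≤ G * M * |b - a| := by
  wlog hab : a ≤ b generalizing a b
  · rw [norm_sub_rev, abs_sub_comm]
    exact this b a (le_of_not_ge hab)
  have hG0 : 0 ≤ G := (norm_nonneg _).trans hG.exists.choose_spec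
  have htail : {ω | a ≤ L ω} \ {ω | b ≤ L ω} = L ⁻¹' Ico a b := by
    ext ω
    simp
  have hsub : {ω | b ≤ L ω} ⊆ {ω | a ≤ L ω} := fun ω hω ↦ hab.trans hω
  rw [norm_sub_rev, ← setIntegral_sdiff (measurableSet_le measurable_const hL) hF.integrableOn hsub,
    htail, abs_of_nonneg (sub_nonneg.2 hab), mul_assoc]
  calc ‖∫ ω in L ⁻¹' Ico a b, F ω ∂P‖ ≤ G * P.real (L ⁻¹' Ico a b) :=
        norm_setIntegral_le_of_norm_le_const_ae' (measure_lt_top _ _) (hG.mono fun _ h _ ↦ h)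
    _ ≤ G * (M * (b - a)) := by gcongr; exact measureReal_preimage_Ico_le hL hM hlaw hab

theorem abs_measureReal_tail_sub_le [IsFiniteMeasure P] [NeZero P] (hL : Measurable L)
    (hM : 0 ≤ M) (hlaw : P.map L ≤ ENNReal.ofReal M • volume) (a b : ℝ) :
    |P.real {ω | b ≤ L ω} - P.real {ω | a ≤ L ω}| ≤ M * |b - a| := by
  simpa [setIntegral_const] using
    norm_setIntegral_tail_sub_le hL hM hlaw (integrable_const (1 : ℝ))
      (G := 1) (.of_forall fun _ ↦ by simp) a b

end TailIntegral

theorem norm_inv_smul_sub_inv_smul_le {E : Type*} [NormedAddCommGroup E] [NormedSpace ℝ E]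
    {p q D G : ℝ} {u v : E} (hp : 0 < p) (hq : 0 < q) (hpq : |p - q| ≤ D)
    (huv : ‖u - v‖ ≤ G * D) (hv : ‖v‖ ≤ G * q) :
    ‖p⁻¹ • u - q⁻¹ • v‖ ≤ 2 * G * D / p := by
  have hsplit : p⁻¹ • u - q⁻¹ • v = p⁻¹ • (u - v) + (p⁻¹ - q⁻¹) • v := by
    rw [smul_sub, sub_smul]; abel
  have h₁ : ‖p⁻¹ • (u - v)‖ ≤ G * D / p := by
    rw [norm_smul, norm_inv, Real.norm_of_nonneg hp.le, inv_mul_eq_div]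
    gcongr
  have h₂ : ‖(p⁻¹ - q⁻¹) • v‖ ≤ G * D / p := by
    rw [norm_smul, Real.norm_eq_abs, inv_sub_inv hp.ne' hq.ne', abs_div,
      abs_of_pos (mul_pos hp hq), abs_sub_comm]
    have hD : 0 ≤ D := (abs_nonneg _).trans hpq
    calc |p - q| / (p * q) * ‖v‖ ≤ D / (p * q) * (G * q) := by gcongr
      _ = G * D / p := by field_simp
  calc ‖p⁻¹ • u - q⁻¹ • v‖ ≤ ‖p⁻¹ • (u - v)‖ + ‖(p⁻¹ - q⁻¹) • v‖ := hsplit ▸ norm_add_le _ _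
    _ ≤ G * D / p + G * D / p := add_le_add h₁ h₂
    _ = 2 * G * D / p := by ring

/-- Proposition 1 (bias from VaR threshold error): if the law of `L` has a
Lebesgue density bounded a.e. by `M` and `X` is integrable with `‖X‖ ≤ G` a.s.,
then the conditional expectation `g(z) = E[X · 1{L ≥ z}] / ℙ(L ≥ z)` satisfies
`‖g(z̃) − g(z)‖ ≤ 2 G M |z̃ − z| / p(z̃)` whenever both tail probabilities are
positive. -/
theorem cvar_subgradient_threshold_bias
    {Ω : Type*} [MeasurableSpace Ω] (P : Measure Ω) [IsProbabilityMeasure P]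
    {d : ℕ} (L : Ω → ℝ) (hL : Measurable L)
    (hac : P.map L ≪ (volume : Measure ℝ))
    (M : ℝ) (hM : 0 ≤ M)
    (hdens : ∀ᵐ x ∂(volume : Measure ℝ),
      (P.map L).rnDeriv volume x ≤ ENNReal.ofReal M)
    (X : Ω → EuclideanSpace ℝ (Fin d)) (hXint : Integrable X P)
    (G : ℝ) (hG : ∀ᵐ ω ∂P, ‖X ω‖ ≤ G)
    (μ : ℝ → EuclideanSpace ℝ (Fin d))
    (hμ : ∀ z : ℝ, μ z = ∫ ω in {ω | z ≤ L ω}, X ω ∂P)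
    (p : ℝ → ℝ)
    (hp : ∀ z : ℝ, p z = (P {ω | z ≤ L ω}).toReal)
    (g : ℝ → EuclideanSpace ℝ (Fin d))
    (hg : ∀ z : ℝ, 0 < p z → g z = (p z)⁻¹ • μ z) :
    ∀ z ztilde : ℝ, 0 < p z → 0 < p ztilde →
      ‖g ztilde - g z‖ ≤ 2 * G * M * |ztilde - z| / p ztilde := by
  intro z ztilde hpz hpzt
  have hlaw : P.map L ≤ ENNReal.ofReal M • volume := Measure.le_smul_of_ae_rnDeriv_le hac hdens
  have hp_diff : |p ztilde - p z| ≤ M * |ztilde - z| := by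
    rw [hp, hp]
    exact abs_measureReal_tail_sub_le hL hM hlaw z ztilde
  have hμ_diff : ‖μ ztilde - μ z‖ ≤ G * (M * |ztilde - z|) := by
    simpa only [hμ, mul_assoc] using norm_setIntegral_tail_sub_le hL hM hlaw hXint hG z ztilde
  have hμ_norm : ‖μ z‖ ≤ G * p z := by
    rw [hμ, hp]
    exact norm_setIntegral_le_of_norm_le_const_ae' (measure_lt_top _ _) (hG.mono fun _ h _ ↦ h)
  rw [hg z hpz, hg ztilde hpzt, mul_assoc (2 * G)]
  exact norm_inv_smul_sub_inv_smul_le hpzt hpz hp_diff hμ_diff hμ_norm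
end

section
/- Let m < M, p > 0, p̂ > 0 and A, Â, ε_A, ε_p be real numbers with |Â − A| ≤ ε_A and |p̂ − p| ≤ ε_p. Define μ = m·p + (M − m)·A, μ̂ = m·p̂ + (M − m)·Â, g = −μ/p and ĝ = −μ̂/p̂. Then |ĝ − g| ≤ (M − m)·ε_A / p̂ + (|m|/p̂ + |μ|/(p̂·p)) · ε_p. -/
/-! The gradient error splits as `ĝ - g = -(μ̂ - μ)/p̂ + μ (p̂ - p)/(p̂ p)`: the numerator error is
controlled through the linearity of `μ` in `(p, A)`, and the change of denominator costs
`|μ| ε_p / (p̂ p)`. -/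

theorem div_sub_div_eq_sub_div_add {K : Type*} [Field K] (a b : K) {x y : K}
    (hx : x ≠ 0) (hy : y ≠ 0) :
    a / x - b / y = (a - b) / x + b * (y - x) / (x * y) := by
  field_simp
  ring

theorem abs_linear_combination_sub_le {R : Type*} [CommRing R] [LinearOrder R]
    [IsStrictOrderedRing R] (a b : R) {x x' y y' εx εy : R}
    (hx : |x' - x| ≤ εx) (hy : |y' - y| ≤ εy) :
    |(a * x' + b * y') - (a * x + b * y)| ≤ |a| * εx + |b| * εy := by
  calc |(a * x' + b * y') - (a * x + b * y)| = |a * (x' - x) + b * (y' - y)| := by ring_nf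
    _ ≤ |a| * |x' - x| + |b| * |y' - y| := by
        simpa only [abs_mul] using abs_add_le (a * (x' - x)) (b * (y' - y))
    _ ≤ |a| * εx + |b| * εy := by gcongr

theorem abs_div_sub_div_le {K : Type*} [Field K] [LinearOrder K] [IsStrictOrderedRing K]
    (a b : K) {x y : K} (hx : x ≠ 0) (hy : y ≠ 0) :
    |a / x - b / y| ≤ |a - b| / |x| + |b| * |x - y| / (|x| * |y|) := by
  calc |a / x - b / y| = |(a - b) / x + b * (y - x) / (x * y)| := by
        rw [div_sub_div_eq_sub_div_add a b hx hy]
    _ ≤ |(a - b) / x| + |b * (y - x) / (x * y)| := abs_add_le _ _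
    _ = |a - b| / |x| + |b| * |x - y| / (|x| * |y|) := by
        rw [abs_div, abs_div, abs_mul, abs_mul, abs_sub_comm y x]

/-- Per-coordinate accuracy bound (Section 3.3): given amplitude estimates
`Â, p̂` with additive errors `ε_A, ε_p` of the true quantities `A, p`, the
de-rescaled gradient coordinate `ĝ = −μ̂/p̂` with `μ̂ = m·p̂ + (M − m)·Â`
satisfies `|ĝ − g| ≤ (M − m)·ε_A/p̂ + (|m|/p̂ + |μ|/(p̂·p))·ε_p`. -/
theorem qae_gradient_coordinate_error
    (m M p phat A Ahat epsA epsp : ℝ)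
    (hmM : m < M) (hp : 0 < p) (hphat : 0 < phat)
    (hA : |Ahat - A| ≤ epsA) (hpe : |phat - p| ≤ epsp)
    (μ μhat g ghat : ℝ)
    (hμ : μ = m * p + (M - m) * A)
    (hμhat : μhat = m * phat + (M - m) * Ahat)
    (hg : g = -μ / p) (hghat : ghat = -μhat / phat) :
    |ghat - g| ≤ (M - m) * epsA / phat + (|m| / phat + |μ| / (phat * p)) * epsp := by
  have hμerr : |μhat - μ| ≤ |m| * epsp + (M - m) * epsA := by
    have := abs_linear_combination_sub_le m (M - m) hpe hA
    rwa [abs_of_pos (sub_pos.2 hmM), ← hμ, ← hμhat] at this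
  calc |ghat - g| ≤ |-μhat - -μ| / |phat| + |-μ| * |phat - p| / (|phat| * |p|) := by
        rw [hg, hghat]
        exact abs_div_sub_div_le _ _ hphat.ne' hp.ne'
    _ = |μhat - μ| / phat + |μ| * |phat - p| / (phat * p) := by
        rw [neg_sub_neg, abs_sub_comm, abs_neg, abs_of_pos hphat, abs_of_pos hp]
    _ ≤ (|m| * epsp + (M - m) * epsA) / phat + |μ| * epsp / (phat * p) := by gcongr
    _ = (M - m) * epsA / phat + (|m| / phat + |μ| / (phat * p)) * epsp := by ring
end

section
/- Let E be a real inner product space, W ⊆ E a nonempty set with ‖u − v‖ ≤ D for all u, v ∈ W, and P : E → E a map with P(x) ∈ W for all x and ‖P(x) − y‖ ≤ ‖x − y‖ for all x ∈ E and y ∈ W. Let f : E → ℝ, T ≥ 1 a natural number, η > 0, ε ≥ 0, G ≥ 0, and let (w_t), (g_t), (e_t) be sequences with w_0 ∈ W and w_{t+1} = P(w_t − η • (g_t + e_t)) for all t < T. Assume for each t < T: f(y) ≥ f(w_t) + ⟪g_t, y − w_t⟫ for all y ∈ W, ‖g_t‖ ≤ G, and ‖e_t‖ ≤ ε. Then for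 every w⋆ ∈ W, min_{t < T} (f(w_t) − f(w⋆)) ≤ D²/(2ηT) + η(G + ε)²/2 + ε·D. -/
open scoped RealInnerProductSpace

/-!
The squared distance to a comparator `w⋆ ∈ W` is a potential: since `P` does not increase
distances to points of `W`, expanding `‖w_t - η (g_t + e_t) - w⋆‖²` and using the subgradient
inequality gives
`f(w_t) - f(w⋆) ≤ (‖w_t - w⋆‖² - ‖w_{t+1} - w⋆‖²) / (2η) + η(G + ε)²/2 + εD`,
where `εD` bounds the bias term `⟪e_t, w_t - w⋆⟫`. Summing over `t < T` telescopes the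
potential, whose initial value is at most `D²/(2η)`, and the minimum is at most the average.
-/

open Finset in
theorem inf'_range_le_of_le_sub_succ {a r : ℕ → ℝ} {c : ℝ} {T : ℕ} (hT : (range T).Nonempty)
    (h : ∀ t < T, a t ≤ r t - r (t + 1) + c) (hr : 0 ≤ r T) :
    (range T).inf' hT a ≤ r 0 / T + c := by
  have hT₀ : (0 : ℝ) < T := by exact_mod_cast nonempty_range_iff.mp hT |>.bot_lt
  have hsum : T * (range T).inf' hT a ≤ r 0 + T * c :=
    calc T * (range T).inf' hT a
        ≤ ∑ t ∈ range T, a t := by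
          simpa using card_nsmul_le_sum (range T) a _ fun t ht => inf'_le a ht
      _ ≤ ∑ t ∈ range T, (r t - r (t + 1) + c) :=
          sum_le_sum fun t ht => h t (mem_range.mp ht)
      _ = r 0 - r T + T * c := by rw [sum_add_distrib, sum_range_sub']; simp
      _ ≤ r 0 + T * c := by linarith
  rw [div_add' _ _ _ hT₀.ne', le_div_iff₀ hT₀]
  linarith

section ProjectedStep

variable {E : Type*} [NormedAddCommGroup E] [InnerProductSpace ℝ E]

theorem norm_sub_smul_sub_sq (x y d : E) (η : ℝ) :
    ‖x - η • d - y‖ ^ 2 = ‖x - y‖ ^ 2 - 2 * η * ⟪d, x - y⟫ + η ^ 2 * ‖d‖ ^ 2 := by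
  rw [sub_right_comm, norm_sub_sq_real, real_inner_smul_right, norm_smul, mul_pow,
    Real.norm_eq_abs, sq_abs, real_inner_comm]
  ring

theorem sub_le_of_inexact_projected_step {f : E → ℝ} {x y g e x' : E} {η G ε D : ℝ}
    (hη : 0 < η) (hsub : f y ≥ f x + ⟪g, y - x⟫) (hg : ‖g‖ ≤ G) (he : ‖e‖ ≤ ε)
    (hxy : ‖x - y‖ ≤ D) (hstep : ‖x' - y‖ ≤ ‖x - η • (g + e) - y‖) :
    f x - f y ≤ (‖x - y‖ ^ 2 - ‖x' - y‖ ^ 2) / (2 * η) + η * (G + ε) ^ 2 / 2 + ε * D := by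
  have hgap : f x - f y ≤ ⟪g, x - y⟫ := by
    rw [← neg_sub y x, inner_neg_right]
    linarith
  have hbias : -(ε * D) ≤ ⟪e, x - y⟫ :=
    neg_le_of_abs_le <| (abs_real_inner_le_norm e (x - y)).trans <|
      mul_le_mul he hxy (norm_nonneg _) ((norm_nonneg e).trans he)
  have hdir : ‖g + e‖ ^ 2 ≤ (G + ε) ^ 2 :=
    pow_le_pow_left₀ (norm_nonneg _) ((norm_add_le g e).trans (add_le_add hg he)) 2
  have hdist : ‖x' - y‖ ^ 2 ≤ ‖x - η • (g + e) - y‖ ^ 2 :=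
    pow_le_pow_left₀ (norm_nonneg _) hstep 2
  rw [norm_sub_smul_sub_sq, inner_add_left] at hdist
  rw [div_add' _ _ _ (by positivity), div_add' _ _ _ (by positivity), le_div_iff₀ (by positivity)]
  nlinarith [mul_le_mul_of_nonneg_left hdir (sq_nonneg η)]

end ProjectedStep

/-- Finite-horizon bound for projected subgradient descent with an ε-accurate
gradient oracle (deterministic core of Proposition 3): with feasible set `W` of
diameter at most `D`, a projection `P` onto `W` nonexpansive toward points of
`W`, subgradients bounded by `G`, oracle errors bounded by `ε`, and step size
`η > 0`, we have
`min_{t<T} (f(w_t) − f(w⋆)) ≤ D²/(2ηT) + η(G + ε)²/2 + ε·D`. -/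
theorem projected_subgradient_descent_inexact
    {E : Type*} [NormedAddCommGroup E] [InnerProductSpace ℝ E]
    (W : Set E) (D : ℝ)
    (hD : ∀ u ∈ W, ∀ v ∈ W, ‖u - v‖ ≤ D)
    (P : E → E) (hPmem : ∀ x : E, P x ∈ W)
    (hPnonexp : ∀ x : E, ∀ y ∈ W, ‖P x - y‖ ≤ ‖x - y‖)
    (f : E → ℝ) (T : ℕ) (hT : 1 ≤ T) (η : ℝ) (hη : 0 < η)
    (ε G : ℝ)
    (w g e : ℕ → E) (hw0 : w 0 ∈ W)
    (hrec : ∀ t < T, w (t + 1) = P (w t - η • (g t + e t)))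
    (hsub : ∀ t < T, ∀ y ∈ W, f y ≥ f (w t) + ⟪g t, y - w t⟫)
    (hgB : ∀ t < T, ‖g t‖ ≤ G)
    (heB : ∀ t < T, ‖e t‖ ≤ ε) :
    ∀ wstar ∈ W,
      (Finset.range T).inf' (Finset.nonempty_range_iff.mpr (by omega))
          (fun t => f (w t) - f wstar)
        ≤ D ^ 2 / (2 * η * T) + η * (G + ε) ^ 2 / 2 + ε * D := by
  intro wstar hstar
  have hmem : ∀ t ≤ T, w t ∈ W := by
    rintro (_ | t) ht
    · exact hw0
    · exact hrec t ht ▸ hPmem _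
  have hstep : ∀ t < T, f (w t) - f wstar ≤ ‖w t - wstar‖ ^ 2 / (2 * η)
      - ‖w (t + 1) - wstar‖ ^ 2 / (2 * η) + (η * (G + ε) ^ 2 / 2 + ε * D) := fun t ht => by
    rw [← sub_div, ← add_assoc]
    exact sub_le_of_inexact_projected_step hη (hsub t ht wstar hstar) (hgB t ht) (heB t ht)
      (hD _ (hmem t ht.le) _ hstar) (hrec t ht ▸ hPnonexp _ wstar hstar)
  refine (inf'_range_le_of_le_sub_succ _ hstep (by positivity)).trans ?_
  have hinit : ‖w 0 - wstar‖ ^ 2 ≤ D ^ 2 :=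
    pow_le_pow_left₀ (norm_nonneg _) (hD _ hw0 _ hstar) 2
  rw [div_div, mul_comm (2 * η), ← add_assoc]
  gcongr
end

section
/- Let (Ω, ℙ) be a probability space, L : Ω → ℝ an integrable random variable, and α ∈ (0, 1). Define the Value-at-Risk q_α = sInf { z ∈ ℝ : ℙ(L ≤ z) ≥ α } and the Rockafellar–Uryasev objective h_α(z) = z + (1 − α)⁻¹ · E[max(L − z, 0)]. Then h_α(q_α) ≤ h_α(z) for every z ∈ ℝ; that is, the α-quantile of L minimizes h_α over ℝ. -/
/-!
Write `F` for the cdf of the law of `L`. Comparing `(x - w)₊ - (x - z)₊` with `z - w` times the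
indicator of `{x > w}` (when `w ≤ z`) or of `{x ≥ w}` (when `z ≤ w`) gives the one-sided
subgradient bounds `(1 - α) (h z - h q) ≥ (z - q) (F q - α)` for `z ≥ q` and
`(1 - α) (h z - h q) ≥ (q - z) (α - F q⁻)` for `z ≤ q`. Both are nonnegative because the quantile
satisfies `F q⁻ ≤ α ≤ F q`: the right inequality by right-continuity of `F`, the left one because
`F w < α` for every `w < q`.
-/

open MeasureTheory ProbabilityTheory Set Filter

namespace ProbabilityTheory

noncomputable def quantile (μ : Measure ℝ) (α : ℝ) : ℝ := sInf {z | α ≤ cdf μ z}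

section Quantile

variable {μ : Measure ℝ} {α : ℝ}

lemma nonempty_setOf_le_cdf (hα : α < 1) : {z | α ≤ cdf μ z}.Nonempty :=
  ((tendsto_cdf_atTop μ).eventually (eventually_ge_nhds hα)).exists

lemma bddBelow_setOf_le_cdf (hα : 0 < α) : BddBelow {z | α ≤ cdf μ z} := by
  obtain ⟨z₀, hz₀⟩ :=
    eventually_atBot.1 ((tendsto_cdf_atBot μ).eventually (eventually_lt_nhds hα))
  exact ⟨z₀, fun z hz => le_of_not_ge fun hzz₀ => (hz₀ z hzz₀).not_ge hz⟩

lemma le_cdf_quantile (hα : α < 1) : α ≤ cdf μ (quantile μ α) := by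
  have hcont := ((cdf μ).right_continuous (quantile μ α)).mono Ioi_subset_Ici_self
  refine ge_of_tendsto hcont (eventually_nhdsWithin_of_forall fun w hw => ?_)
  obtain ⟨s, hs, hsw⟩ := exists_lt_of_csInf_lt (nonempty_setOf_le_cdf hα) hw
  exact hs.trans (monotone_cdf μ hsw.le)

lemma leftLim_cdf_quantile_le (hα : 0 < α) :
    Function.leftLim (cdf μ) (quantile μ α) ≤ α := by
  refine le_of_tendsto ((monotone_cdf μ).tendsto_leftLim _)
    (eventually_nhdsWithin_of_forall fun w hw => ?_)
  exact (not_le.1 (notMem_of_lt_csInf (s := {z | α ≤ cdf μ z}) hw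
    (bddBelow_setOf_le_cdf hα))).le

variable [IsProbabilityMeasure μ]

lemma measureReal_Ioi_quantile_le (hα : α < 1) : μ.real (Ioi (quantile μ α)) ≤ 1 - α := by
  rw [← compl_Iic, probReal_compl_eq_one_sub measurableSet_Iic, ← cdf_eq_real]
  linarith [le_cdf_quantile (μ := μ) hα]

lemma one_sub_le_measureReal_Ici_quantile (hα : 0 < α) :
    1 - α ≤ μ.real (Ici (quantile μ α)) := by
  have hIci := (cdf μ).measure_Ici (tendsto_cdf_atTop μ) (quantile μ α)
  rw [measure_cdf] at hIci
  rw [measureReal_def, ← ENNReal.ofReal_le_iff_le_toReal (measure_ne_top _ _), hIci]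
  exact ENNReal.ofReal_le_ofReal (by linarith [leftLim_cdf_quantile_le (μ := μ) hα])

end Quantile

end ProbabilityTheory

section PosPart

variable {μ : Measure ℝ} [IsFiniteMeasure μ] {w z : ℝ}

lemma posPart_sub_sub_posPart_sub_le_indicator (x : ℝ) (hwz : w ≤ z) :
    max (x - w) 0 - max (x - z) 0 ≤ (Ioi w).indicator (fun _ => z - w) x := by
  simp only [indicator_apply, mem_Ioi]
  split_ifs <;> grind

lemma indicator_le_posPart_sub_sub_posPart_sub (x : ℝ) (hzw : z ≤ w) :
    (Ici w).indicator (fun _ => w - z) x ≤ max (x - z) 0 - max (x - w) 0 := by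
  simp only [indicator_apply, mem_Ici]
  split_ifs <;> grind

lemma integrable_posPart_sub (hμ : Integrable id μ) (z : ℝ) :
    Integrable (fun x => max (x - z) 0) μ :=
  (hμ.sub (integrable_const z)).pos_part

lemma integral_posPart_sub_sub_le (hμ : Integrable id μ) (hwz : w ≤ z) :
    ∫ x, max (x - w) 0 ∂μ - ∫ x, max (x - z) 0 ∂μ ≤ (z - w) * μ.real (Ioi w) := by
  rw [← integral_sub (integrable_posPart_sub hμ w) (integrable_posPart_sub hμ z), mul_comm,
    ← smul_eq_mul, ← integral_indicator_const _ measurableSet_Ioi]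
  exact integral_mono ((integrable_posPart_sub hμ w).sub (integrable_posPart_sub hμ z))
    ((integrable_const _).indicator measurableSet_Ioi)
    fun x => posPart_sub_sub_posPart_sub_le_indicator x hwz

lemma mul_measureReal_Ici_le_integral_posPart_sub_sub (hμ : Integrable id μ) (hzw : z ≤ w) :
    (w - z) * μ.real (Ici w) ≤ ∫ x, max (x - z) 0 ∂μ - ∫ x, max (x - w) 0 ∂μ := by
  rw [← integral_sub (integrable_posPart_sub hμ z) (integrable_posPart_sub hμ w), mul_comm,
    ← smul_eq_mul, ← integral_indicator_const _ measurableSet_Ici]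
  exact integral_mono ((integrable_const _).indicator measurableSet_Ici)
    ((integrable_posPart_sub hμ z).sub (integrable_posPart_sub hμ w))
    fun x => indicator_le_posPart_sub_sub_posPart_sub x hzw

end PosPart

section RockafellarUryasev

noncomputable def rockafellarUryasev (μ : Measure ℝ) (α z : ℝ) : ℝ :=
  z + (1 - α)⁻¹ * ∫ x, max (x - z) 0 ∂μ

variable {μ : Measure ℝ} {α w z : ℝ}

lemma rockafellarUryasev_le_of_integral_sub_le (hα : α < 1)
    (h : ∫ x, max (x - w) 0 ∂μ - ∫ x, max (x - z) 0 ∂μ ≤ (z - w) * (1 - α)) :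
    rockafellarUryasev μ α w ≤ rockafellarUryasev μ α z := by
  have key : (1 - α)⁻¹ * (∫ x, max (x - w) 0 ∂μ - ∫ x, max (x - z) 0 ∂μ) ≤ z - w := by
    rw [inv_mul_le_iff₀ (sub_pos.2 hα)]
    linarith
  rw [mul_sub] at key
  unfold rockafellarUryasev
  linarith

theorem rockafellarUryasev_quantile_le [IsProbabilityMeasure μ] (hμ : Integrable id μ)
    (hα : α ∈ Ioo 0 1) (z : ℝ) :
    rockafellarUryasev μ α (quantile μ α) ≤ rockafellarUryasev μ α z := by
  refine rockafellarUryasev_le_of_integral_sub_le hα.2 ?_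
  rcases le_total (quantile μ α) z with hqz | hzq
  · calc _ ≤ (z - quantile μ α) * μ.real (Ioi (quantile μ α)) :=
          integral_posPart_sub_sub_le hμ hqz
      _ ≤ (z - quantile μ α) * (1 - α) := by
          gcongr
          exact measureReal_Ioi_quantile_le hα.2
  · have hIci := mul_le_mul_of_nonneg_left
      (one_sub_le_measureReal_Ici_quantile (μ := μ) hα.1) (sub_nonneg.2 hzq)
    linarith [mul_measureReal_Ici_le_integral_posPart_sub_sub hμ hzq]

end RockafellarUryasev

/-- The α-quantile (Value-at-Risk) `q_α = inf{z : ℙ(L ≤ z) ≥ α}` minimizes the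
Rockafellar–Uryasev objective `h_α(z) = z + (1 − α)⁻¹ · E[max(L − z, 0)]`. -/
theorem var_minimizes_rockafellar_uryasev
    {Ω : Type*} [MeasurableSpace Ω] (P : Measure Ω) [IsProbabilityMeasure P]
    (L : Ω → ℝ) (hL : Measurable L) (hLint : Integrable L P)
    (α : ℝ) (hα : α ∈ Set.Ioo (0 : ℝ) 1)
    (q : ℝ) (hq : q = sInf {z : ℝ | α ≤ (P {ω | L ω ≤ z}).toReal})
    (h : ℝ → ℝ)
    (hh : ∀ z : ℝ, h z = z + (1 - α)⁻¹ * ∫ ω, max (L ω - z) 0 ∂P) :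
    ∀ z : ℝ, h q ≤ h z := by
  have : IsProbabilityMeasure (P.map L) := Measure.isProbabilityMeasure_map hL.aemeasurable
  have hcdf (z : ℝ) : (P {ω | L ω ≤ z}).toReal = cdf (P.map L) z := by
    rw [cdf_eq_real, measureReal_def, Measure.map_apply hL measurableSet_Iic]
    rfl
  have hintegral (z : ℝ) : ∫ ω, max (L ω - z) 0 ∂P = ∫ x, max (x - z) 0 ∂(P.map L) :=
    (integral_map (f := fun x => max (x - z) 0) hL.aemeasurable (by fun_prop)).symm
  have hμ : Integrable id (P.map L) :=
    (integrable_map_measure aestronglyMeasurable_id hL.aemeasurable).2 hLint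
  simp only [hcdf] at hq
  intro z
  rw [hh, hh, hintegral, hintegral, hq]
  exact rockafellarUryasev_quantile_le hμ hα z
end

section
/- Let (Ω, ℙ) be a probability space, r : Ω → ℝ^d an integrable random vector, α ∈ (0, 1), and w ∈ ℝ^d. Let L = −⟪w, r⟫ be the portfolio loss, and let q = sInf { z ∈ ℝ : ℙ(L ≤ z) ≥ α }. Assume ℙ(L = q) = 0 and ℙ(L ≥ q) = 1 − α. Define F(v) = ⨅_{z ∈ ℝ} ( z + (1 − α)⁻¹ · E[max(−⟪v, r⟫ − z, 0)] ) and g = (1 − α)⁻¹ • E[(−r) · 1{L ≥ q}]. Then for all v ∈ ℝ^d, F(v) ≥ F(w) + ⟪g, v − w⟫; that is, g = E[−r | L ≥ q] is a subgradient of F = CVaR_α at w. -/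
/-!
For a fixed `z`, the pointwise convexity inequality of `(x, z) ↦ (x - z)₊` at `(X, q)` gives
`(Y - z)₊ ≥ (X - q)₊ + 1{q ≤ X} · ((Y - X) + (q - z))`. Integrating it and multiplying by
`c = (1 - α)⁻¹`, the condition `c · ℙ(q ≤ X) = 1` makes the `q - z` terms cancel against the
`z`-shift of the Rockafellar–Uryasev objective, so its value at `(Y, z)` dominates its value at
`(X, q)` plus `c · E[(Y - X) · 1{q ≤ X}]`. Taking the infimum over `z` gives the subgradient
inequality for CVaR on integrable losses; with `X = -⟪w, r⟫`, `Y = -⟪v, r⟫` the correction term is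
`⟪g, v - w⟫`.
-/

open MeasureTheory Set
open scoped RealInnerProductSpace

lemma max_sub_zero_add_ite_le (x y q z : ℝ) :
    max (x - q) 0 + (if q ≤ x then y - x + (q - z) else 0) ≤ max (y - z) 0 := by
  split_ifs with h
  · rw [max_eq_left (sub_nonneg.mpr h)]
    linarith [le_max_left (y - z) 0]
  · rw [max_eq_right (by linarith)]
    simp

namespace ProbabilityTheory

variable {Ω : Type*} [MeasurableSpace Ω] {P : Measure Ω} {X Y : Ω → ℝ}

noncomputable def ruObjective (P : Measure Ω) (c : ℝ) (X : Ω → ℝ) (z : ℝ) : ℝ :=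
  z + c * ∫ ω, max (X ω - z) 0 ∂P

/-- With `c = (1 - α)⁻¹` this is the Rockafellar–Uryasev representation of `CVaR_α(X)`. -/
noncomputable def cvar (P : Measure Ω) (c : ℝ) (X : Ω → ℝ) : ℝ :=
  ⨅ z, ruObjective P c X z

lemma integrable_max_sub_zero [IsFiniteMeasure P] (hX : Integrable X P) (z : ℝ) :
    Integrable (fun ω => max (X ω - z) 0) P :=
  (hX.sub (integrable_const z)).pos_part

lemma integral_max_sub_zero_add_le [IsFiniteMeasure P] (hX : Integrable X P)
    (hY : Integrable Y P) (q z : ℝ) :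
    ∫ ω, max (X ω - q) 0 ∂P + ((∫ ω in {ω | q ≤ X ω}, (Y ω - X ω) ∂P)
        + (q - z) * P.real {ω | q ≤ X ω}) ≤ ∫ ω, max (Y ω - z) 0 ∂P := by
  set s := {ω | q ≤ X ω}
  have hs : NullMeasurableSet s P :=
    nullMeasurableSet_le aemeasurable_const hX.aemeasurable
  have hind : Integrable (s.indicator fun ω => Y ω - X ω + (q - z)) P :=
    ((hY.sub hX).add (integrable_const _)).indicator₀ hs
  have hsplit : ∫ ω, s.indicator (fun ω => Y ω - X ω + (q - z)) ω ∂P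
      = ∫ ω in s, (Y ω - X ω) ∂P + (q - z) * P.real s := by
    rw [integral_indicator₀ hs, integral_add (f := fun ω => Y ω - X ω) (hY.sub hX).integrableOn
      (integrableOn_const (measure_ne_top P s)), setIntegral_const, smul_eq_mul, mul_comm]
  rw [← hsplit, ← integral_add (integrable_max_sub_zero hX q) hind]
  refine integral_mono ((integrable_max_sub_zero hX q).add hind)
    (integrable_max_sub_zero hY z) fun ω => ?_
  simpa only [Pi.add_apply, indicator_apply, s, mem_ofPred_eq] using
    max_sub_zero_add_ite_le (X ω) (Y ω) q z

lemma ruObjective_add_setIntegral_sub_le [IsFiniteMeasure P] (hX : Integrable X P)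
    (hY : Integrable Y P) {c q : ℝ} (hc : c * P.real {ω | q ≤ X ω} = 1) (z : ℝ) :
    ruObjective P c X q + c * ∫ ω in {ω | q ≤ X ω}, (Y ω - X ω) ∂P ≤ ruObjective P c Y z := by
  have hc0 : 0 ≤ c := by nlinarith [measureReal_nonneg (μ := P) (s := {ω | q ≤ X ω})]
  have := mul_le_mul_of_nonneg_left (integral_max_sub_zero_add_le hX hY q z) hc0
  unfold ruObjective
  linear_combination this + (z - q) * hc

lemma le_ruObjective [IsProbabilityMeasure P] (hX : Integrable X P) {c : ℝ} (hc : 1 ≤ c)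
    (z : ℝ) : ∫ ω, X ω ∂P ≤ ruObjective P c X z := by
  have hpos : 0 ≤ ∫ ω, max (X ω - z) 0 ∂P := integral_nonneg fun ω => le_max_right _ _
  have hmean : ∫ ω, X ω ∂P - z ≤ ∫ ω, max (X ω - z) 0 ∂P := by
    calc ∫ ω, X ω ∂P - z = ∫ ω, (X ω - z) ∂P := by
          simp [integral_sub hX (integrable_const z)]
      _ ≤ ∫ ω, max (X ω - z) 0 ∂P :=
          integral_mono (hX.sub (integrable_const z)) (integrable_max_sub_zero hX z)
            fun ω => le_max_left _ _
  unfold ruObjective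
  nlinarith

theorem cvar_add_setIntegral_sub_le [IsProbabilityMeasure P] (hX : Integrable X P)
    (hY : Integrable Y P) {c q : ℝ} (hc : c * P.real {ω | q ≤ X ω} = 1) :
    cvar P c X + c * ∫ ω in {ω | q ≤ X ω}, (Y ω - X ω) ∂P ≤ cvar P c Y := by
  have hc0 : 0 ≤ c := by nlinarith [measureReal_nonneg (μ := P) (s := {ω | q ≤ X ω})]
  have hc1 : 1 ≤ c := by nlinarith [measureReal_le_one (μ := P) (s := {ω | q ≤ X ω})]
  have hbdd : BddBelow (range (ruObjective P c X)) :=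
    ⟨∫ ω, X ω ∂P, forall_mem_range.mpr (le_ruObjective hX hc1)⟩
  refine le_ciInf fun z => le_trans ?_ (ruObjective_add_setIntegral_sub_le hX hY hc z)
  gcongr
  exact ciInf_le hbdd q

end ProbabilityTheory

theorem cvar_subgradient_formula_general
    {Ω : Type*} [MeasurableSpace Ω] (P : Measure Ω) [IsProbabilityMeasure P]
    {d : ℕ} (r : Ω → EuclideanSpace ℝ (Fin d)) (hr : Integrable r P)
    (α : ℝ) (hα : α ∈ Set.Ioo (0 : ℝ) 1)
    (w : EuclideanSpace ℝ (Fin d))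
    (L : Ω → ℝ) (hLdef : ∀ ω, L ω = -⟪w, r ω⟫)
    (q : ℝ)
    (htail : (P {ω | q ≤ L ω}).toReal = 1 - α)
    (F : EuclideanSpace ℝ (Fin d) → ℝ)
    (hF : ∀ v : EuclideanSpace ℝ (Fin d),
      F v = ⨅ z : ℝ, (z + (1 - α)⁻¹ * ∫ ω, max (-⟪v, r ω⟫ - z) 0 ∂P))
    (g : EuclideanSpace ℝ (Fin d))
    (hg : g = (1 - α)⁻¹ • ∫ ω in {ω | q ≤ L ω}, (-(r ω)) ∂P) :
    ∀ v : EuclideanSpace ℝ (Fin d), F v ≥ F w + ⟪g, v - w⟫ := by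
  intro v
  obtain rfl : L = fun ω => -⟪w, r ω⟫ := funext hLdef
  dsimp only at htail hg
  have hloss (u : EuclideanSpace ℝ (Fin d)) : Integrable (fun ω => -⟪u, r ω⟫) P :=
    ((innerSL ℝ u).integrable_comp hr).neg
  have hc : (1 - α)⁻¹ * P.real {ω | q ≤ -⟪w, r ω⟫} = 1 := by
    rw [measureReal_def, htail]
    exact inv_mul_cancel₀ (sub_ne_zero.mpr hα.2.ne')
  have hgv : ⟪g, v - w⟫
      = (1 - α)⁻¹ * ∫ ω in {ω | q ≤ -⟪w, r ω⟫}, (-⟪v, r ω⟫ - -⟪w, r ω⟫) ∂P := by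
    rw [hg, real_inner_smul_left, real_inner_comm,
      ← integral_inner (f := fun ω => -r ω) hr.integrableOn.neg]
    congr 2 with ω
    rw [inner_neg_right, inner_sub_left]
    ring
  rw [ge_iff_le, hF, hF, hgv]
  exact ProbabilityTheory.cvar_add_setIntegral_sub_le (hloss w) (hloss v) hc

/-- Rockafellar–Uryasev subgradient formula: with loss `L = −⟪w, r⟫`, VaR
threshold `q` the α-quantile of `L`, no atom at `q`, and `ℙ(L ≥ q) = 1 − α`,
the vector `g = (1 − α)⁻¹ • E[(−r) · 1{L ≥ q}] = E[−r | L ≥ q]` is a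
subgradient at `w` of `F(v) = ⨅_z ( z + (1 − α)⁻¹ · E[max(−⟪v, r⟫ − z, 0)] )`,
i.e. `F(v) ≥ F(w) + ⟪g, v − w⟫` for all `v`. -/
theorem cvar_subgradient_formula
    {Ω : Type*} [MeasurableSpace Ω] (P : Measure Ω) [IsProbabilityMeasure P]
    {d : ℕ} (r : Ω → EuclideanSpace ℝ (Fin d)) (hr : Integrable r P)
    (α : ℝ) (hα : α ∈ Set.Ioo (0 : ℝ) 1)
    (w : EuclideanSpace ℝ (Fin d))
    (L : Ω → ℝ) (hLdef : ∀ ω, L ω = -⟪w, r ω⟫)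
    (q : ℝ) (hq : q = sInf {z : ℝ | α ≤ (P {ω | L ω ≤ z}).toReal})
    (hatom : P {ω | L ω = q} = 0)
    (htail : (P {ω | q ≤ L ω}).toReal = 1 - α)
    (F : EuclideanSpace ℝ (Fin d) → ℝ)
    (hF : ∀ v : EuclideanSpace ℝ (Fin d),
      F v = ⨅ z : ℝ, (z + (1 - α)⁻¹ * ∫ ω, max (-⟪v, r ω⟫ - z) 0 ∂P))
    (g : EuclideanSpace ℝ (Fin d))
    (hg : g = (1 - α)⁻¹ • ∫ ω in {ω | q ≤ L ω}, (-(r ω)) ∂P) :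
    ∀ v : EuclideanSpace ℝ (Fin d), F v ≥ F w + ⟪g, v - w⟫ :=
  cvar_subgradient_formula_general P r hr α hα w L hLdef q htail F hF g hg
end
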